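/- arXiv:1909.00380 — 3 statements merged into one kernel-verified Lean document; each statement's English description precedes it below -/
import Mathlib

section
/- Let G be a finite group, Z its center, and ψ : Z → ℂ× an injective character such that the induced pairing ⟨xZ, yZ⟩ := ψ([x,y]) on G/Z is well-defined and non-degenerate (G two-step nilpotent with [G,G] ⊆ Z). Then every complex irreducible representation of G with central character ψ has dimension equal to the square root of [G : Z], and any two such irreducible representations are isomorphic (Stone–von Neumann uniqueness). -/
/-!
If `x ∉ Z`, genericity of `ψ` gives `y` with `[x, y]` acting by a scalar `≠ 1`; since
`x = [x, y] · y x y⁻¹` and characters are class functions, `χ(x) = 0`. So the characters of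
`V` and `W` are supported on `Z`, where they equal `ψ · dim`, and the inner product of characters
gives `dim V · dim W = [G : Z] · dim Hom_G(W, V)`. Schur's lemma (`dim End_G V = 1`) turns this
into `(dim V)² = [G : Z]` and shows `Hom_G(W, V) ≠ 0`, so the irreducibles `V` and `W` are
isomorphic.
-/

open Module

namespace Representation

variable {G k V W : Type*} [Field k] [AddCommGroup V] [Module k V] [AddCommGroup W] [Module k W]

theorem isIrreducible_of_forall_submodule [Monoid G] [Nontrivial V] (ρ : Representation k G V)
    (h : ∀ U : Submodule k V, (∀ g : G, ∀ v ∈ U, ρ g v ∈ U) → U = ⊥ ∨ U = ⊤) :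
    IsIrreducible ρ where
  exists_pair_ne := ⟨⊥, ⊤, fun h => bot_ne_top (congrArg Subrepresentation.toSubmodule h)⟩
  eq_bot_or_eq_top U := (h U.toSubmodule U.apply_mem_toSubmodule).imp
    (fun h => Subrepresentation.toSubmodule_injective h)
    (fun h => Subrepresentation.toSubmodule_injective h)

theorem character_eq_of_forall_apply_eq_smul [Monoid G] [FiniteDimensional k V]
    (ρ : Representation k G V) {g : G} {c : k} (hg : ∀ v, ρ g v = c • v) :
    ρ.character g = c * finrank k V := by
  rw [character, show ρ g = c • 1 from LinearMap.ext hg, map_smul, LinearMap.trace_one,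
    smul_eq_mul]

theorem character_eq_zero_of_commutator_apply_eq_smul [Group G] (ρ : Representation k G V)
    {x y : G} {a : k} (ha : a ≠ 1) (hc : ∀ v, ρ (x * y * x⁻¹ * y⁻¹) v = a • v) :
    ρ.character x = 0 := by
  have hconj : ρ x = ρ (x * y * x⁻¹ * y⁻¹) * ρ (y * x * y⁻¹) := by
    rw [← map_mul]; group
  have hfixed : ρ.character x = a * ρ.character x := by
    conv_lhs => rw [character, hconj, show ρ (x * y * x⁻¹ * y⁻¹) = a • 1 from LinearMap.ext hc,
      smul_mul_assoc, one_mul, map_smul, ← character, char_conj, smul_eq_mul]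
  exact (mul_left_eq_self₀.mp hfixed.symm).resolve_left ha

section CentralCharacter

variable [Group G] [Fintype G] [FiniteDimensional k V] [FiniteDimensional k W] (Z : Subgroup G)
  (ψ : Z →* kˣ) (ρ : Representation k G V) (σ : Representation k G W)
  (hρ : ∀ (z : Z) (v : V), ρ z v = (ψ z : k) • v) (hσ : ∀ (z : Z) (w : W), σ z w = (ψ z : k) • w)
  (hvanish : ∀ x ∉ Z, ρ.character x = 0)

include hρ hσ hvanish

theorem sum_character_mul_character_inv_of_central :
    ∑ g : G, ρ.character g * σ.character g⁻¹ = Nat.card Z * (finrank k V * finrank k W) := by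
  classical
  have hcentral (z : Z) : ρ.character z * σ.character (z : G)⁻¹ = finrank k V * finrank k W := by
    rw [character_eq_of_forall_apply_eq_smul ρ (hρ z), ← Subgroup.coe_inv,
      character_eq_of_forall_apply_eq_smul σ (hσ z⁻¹), map_inv, Units.val_inv_eq_inv_val]
    field_simp
  rw [← Fintype.sum_subtype_add_sum_subtype (· ∈ Z),
    Fintype.sum_eq_zero (fun x : {x // x ∉ Z} => ρ.character x * σ.character (x : G)⁻¹)
      (fun x => by rw [hvanish x x.2, zero_mul]), add_zero]
  simp only [hcentral, Finset.sum_const, Finset.card_univ, nsmul_eq_mul, Nat.card_eq_fintype_card]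

theorem finrank_mul_finrank_eq_index_mul_finrank_intertwiningMap
    [Invertible (Nat.card G : k)] :
    (finrank k V * finrank k W : k) = Z.index * finrank k (IntertwiningMap σ ρ) := by
  have hcard : (Nat.card G : k) = Nat.card Z * Z.index := by
    rw [← Z.card_mul_index, Nat.cast_mul]
  obtain ⟨hZ, hindex⟩ : (Nat.card Z : k) ≠ 0 ∧ (Z.index : k) ≠ 0 :=
    mul_ne_zero_iff.mp (hcard ▸ Invertible.ne_zero (Nat.card G : k))
  rw [← card_inv_mul_sum_char_mul_char_eq_finrank σ ρ,
    sum_character_mul_character_inv_of_central Z ψ ρ σ hρ hσ hvanish, hcard]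
  field_simp

end CentralCharacter

theorem character_eq_zero_of_notMem_center [Group G]
    (hcomm : ∀ x y : G, x * y * x⁻¹ * y⁻¹ ∈ Subgroup.center G)
    (ψ : Subgroup.center G →* kˣ)
    (hgen : ∀ x : G, (∀ y : G, ψ ⟨x * y * x⁻¹ * y⁻¹, hcomm x y⟩ = 1) → x ∈ Subgroup.center G)
    (ρ : Representation k G V) (hρ : ∀ (z : Subgroup.center G) (v : V), ρ z v = (ψ z : k) • v)
    {x : G} (hx : x ∉ Subgroup.center G) : ρ.character x = 0 := by
  obtain ⟨y, hy⟩ := not_forall.mp (mt (hgen x) hx)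
  exact character_eq_zero_of_commutator_apply_eq_smul ρ (fun h => hy (Units.ext h))
    (hρ ⟨_, hcomm x y⟩)

end Representation

open Representation

theorem stmt8_general {G : Type*} [Group G] [Fintype G]
    (hcomm : ∀ x y : G, x * y * x⁻¹ * y⁻¹ ∈ Subgroup.center G)
    (ψ : Subgroup.center G →* ℂˣ)
    (hgen : ∀ x : G, (∀ y : G, ψ ⟨x * y * x⁻¹ * y⁻¹, hcomm x y⟩ = 1) →
      x ∈ Subgroup.center G)
    {V W : Type*} [AddCommGroup V] [Module ℂ V] [FiniteDimensional ℂ V] [Nontrivial V]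
    [AddCommGroup W] [Module ℂ W] [FiniteDimensional ℂ W] [Nontrivial W]
    (ρ : Representation ℂ G V) (ρ' : Representation ℂ G W)
    (hirr : ∀ U : Submodule ℂ V, (∀ g : G, ∀ v ∈ U, ρ g v ∈ U) → U = ⊥ ∨ U = ⊤)
    (hirr' : ∀ U : Submodule ℂ W, (∀ g : G, ∀ w ∈ U, ρ' g w ∈ U) → U = ⊥ ∨ U = ⊤)
    (hcent : ∀ (z : Subgroup.center G) (v : V), ρ (z : G) v = (ψ z : ℂ) • v)
    (hcent' : ∀ (z : Subgroup.center G) (w : W), ρ' (z : G) w = (ψ z : ℂ) • w) :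
    (Module.finrank ℂ V) ^ 2 = (Subgroup.center G).index ∧
    ∃ e : V ≃ₗ[ℂ] W, ∀ (g : G) (v : V), e (ρ g v) = ρ' g (e v) := by
  have := isIrreducible_of_forall_submodule ρ hirr
  have := isIrreducible_of_forall_submodule ρ' hirr'
  have : Invertible (Nat.card G : ℂ) :=
    invertibleOfNonzero (Nat.cast_ne_zero.mpr Nat.card_pos.ne')
  have hvanish : ∀ x ∉ Subgroup.center G, ρ.character x = 0 :=
    fun _ => character_eq_zero_of_notMem_center hcomm ψ hgen ρ hcent
  have hsq : finrank ℂ V ^ 2 = (Subgroup.center G).index := by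
    have := finrank_mul_finrank_eq_index_mul_finrank_intertwiningMap _ ψ ρ ρ hcent hcent hvanish
    rw [IsIrreducible.finrank_intertwiningMap_self, Nat.cast_one, mul_one] at this
    exact_mod_cast (sq _).trans this
  have hhom : finrank ℂ (IntertwiningMap ρ' ρ) ≠ 0 := by
    have hcross : finrank ℂ V * finrank ℂ W
        = (Subgroup.center G).index * finrank ℂ (IntertwiningMap ρ' ρ) := by
      exact_mod_cast
        finrank_mul_finrank_eq_index_mul_finrank_intertwiningMap _ ψ ρ ρ' hcent hcent' hvanish
    exact right_ne_zero_of_mul (hcross ▸ mul_ne_zero finrank_pos.ne' finrank_pos.ne')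
  obtain ⟨φ⟩ : Nonempty (Equiv ρ' ρ) := by
    by_contra hempty
    have : IsEmpty (Equiv ρ' ρ) := not_nonempty_iff.mp hempty
    exact hhom finrank_zero_of_subsingleton
  exact ⟨hsq, φ.symm.toLinearEquiv, φ.symm.toIntertwiningMap.isIntertwining⟩

/-- Stone–von Neumann: Let `G` be a finite two-step nilpotent group with
center `Z` and `ψ : Z → ℂˣ` an injective (generic) character.  Every complex irreducible
representation of `G` with central character `ψ` has dimension the square root of
`[G : Z]`, and any two such representations are isomorphic. -/
theorem stmt8 {G : Type*} [Group G] [Fintype G]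
    (hcomm : ∀ x y : G, x * y * x⁻¹ * y⁻¹ ∈ Subgroup.center G)
    (ψ : Subgroup.center G →* ℂˣ) (hinj : Function.Injective ψ)
    (hgen : ∀ x : G, (∀ y : G, ψ ⟨x * y * x⁻¹ * y⁻¹, hcomm x y⟩ = 1) →
      x ∈ Subgroup.center G)
    {V W : Type*} [AddCommGroup V] [Module ℂ V] [FiniteDimensional ℂ V] [Nontrivial V]
    [AddCommGroup W] [Module ℂ W] [FiniteDimensional ℂ W] [Nontrivial W]
    (ρ : Representation ℂ G V) (ρ' : Representation ℂ G W)
    (hirr : ∀ U : Submodule ℂ V, (∀ g : G, ∀ v ∈ U, ρ g v ∈ U) → U = ⊥ ∨ U = ⊤)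
    (hirr' : ∀ U : Submodule ℂ W, (∀ g : G, ∀ w ∈ U, ρ' g w ∈ U) → U = ⊥ ∨ U = ⊤)
    (hcent : ∀ (z : Subgroup.center G) (v : V), ρ (z : G) v = (ψ z : ℂ) • v)
    (hcent' : ∀ (z : Subgroup.center G) (w : W), ρ' (z : G) w = (ψ z : ℂ) • w) :
    (Module.finrank ℂ V) ^ 2 = (Subgroup.center G).index ∧
    ∃ e : V ≃ₗ[ℂ] W, ∀ (g : G) (v : V), e (ρ g v) = ρ' g (e v) :=
  stmt8_general hcomm ψ hgen ρ ρ' hirr hirr' hcent hcent'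
end

section
/- Let G be a finite two-step nilpotent group with center Z, and ψ : Z → ℂ× a generic character (for every x ∉ Z there exists y with ψ([x,y]) ≠ 1). Then the index [G : Z] is a perfect square. -/
/-!
The commutator pairing `(x, y) ↦ ψ ⁅x, y⁆` descends to an alternating pairing on the abelian
group `G ⧸ Z`, and genericity of `ψ` says that it is nondegenerate. Such a pairing `B` on a
finite abelian group `A`, with values in the units of a domain, forces `|A|` to be a square: take
`x` of maximal order `n` and `y` with `B x y` of order `n`, hence a primitive `n`-th root of
unity. Then `a ↦ (B a y, B x a)` maps `A` onto `μₙ × μₙ`, and `B` stays nondegenerate on its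
kernel `K` because `A` is generated by `x`, `y` and `K`. So `|A| = n² |K|`, and induction on
`|A|` concludes.
-/

open Subgroup
open scoped commutatorElement IsMulCommutative

namespace MonoidHom

section Pairing

variable {A M : Type*} [CommGroup A] [CommGroup M] {B : A →* A →* M} (hB : ∀ a, B a a = 1)
include hB

theorem apply_swap_of_apply_self (a b : A) : B b a = (B a b)⁻¹ := by
  have h := hB (a * b)
  simp only [map_mul, mul_apply, hB, one_mul, mul_one] at h
  exact eq_inv_of_mul_eq_one_left h

theorem flip_prod_apply_zpow_mul_zpow (x y : A) (i k : ℤ) :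
    (B.flip y).prod (B x) (x ^ i * y ^ k) = (B x y ^ i, B x y ^ k) := by
  simp [hB]

end Pairing

variable {R : Type*} [CommRing R] [IsDomain R]

theorem exists_orderOf_apply_eq_orderOf {A : Type*} [Group A] [Finite A] (f : A →* Rˣ) :
    ∃ y, orderOf (f y) = orderOf f := by
  have : Finite f.range := Set.finite_range f |>.to_subtype
  obtain ⟨⟨_, y, rfl⟩, hy⟩ := IsCyclic.exists_generator (α := f.range)
  refine ⟨y, dvd_antisymm ?_ ?_⟩
  · exact orderOf_dvd_of_pow_eq_one (by rw [← pow_apply, pow_orderOf_eq_one, one_apply])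
  · refine orderOf_dvd_of_pow_eq_one (ext fun b => ?_)
    obtain ⟨k, hk⟩ := hy ⟨f b, b, rfl⟩
    have hk : f y ^ k = f b := congrArg Subtype.val hk
    rw [pow_apply, one_apply, ← hk, ← zpow_natCast, ← zpow_mul, mul_comm, zpow_mul,
      zpow_natCast, pow_orderOf_eq_one, one_zpow]

variable {A : Type*} [CommGroup A] [Finite A] {B : A →* A →* Rˣ}

theorem exists_orderOf_apply_apply_eq_exponent (hinj : Function.Injective B) :
    ∃ x y, orderOf (B x y) = Monoid.exponent A := by
  obtain ⟨x, hx⟩ := Monoid.exists_orderOf_eq_exponent (Monoid.ExponentExists.of_finite (G := A))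
  obtain ⟨y, hy⟩ := exists_orderOf_apply_eq_orderOf (B x)
  exact ⟨x, y, by rw [hy, orderOf_injective B hinj, hx]⟩

section Splitting

variable (hB : ∀ a, B a a = 1) {x y : A} (hxy : orderOf (B x y) = Monoid.exponent A)
include hB hxy

theorem range_flip_prod_eq :
    ((B.flip y).prod (B x)).range = (zpowers (B x y)).prod (zpowers (B x y)) := by
  have : NeZero (Monoid.exponent A) := ⟨Monoid.exponent_ne_zero_of_finite⟩
  have hζ : zpowers (B x y) = rootsOfUnity (Monoid.exponent A) R := by
    have := IsPrimitiveRoot.orderOf (B x y)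
    rw [hxy] at this
    exact this.zpowers_eq
  apply le_antisymm
  · rintro _ ⟨a, rfl⟩
    simp only [hζ, prod_apply, mem_prod, mem_rootsOfUnity, flip_apply, ← map_pow,
      Monoid.pow_exponent_eq_one, map_one, and_self]
  · rintro ⟨_, _⟩ ⟨⟨i, rfl⟩, ⟨k, rfl⟩⟩
    exact ⟨x ^ i * y ^ k, flip_prod_apply_zpow_mul_zpow hB x y i k⟩

theorem card_eq_exponent_sq_mul_card_ker :
    Nat.card A = Monoid.exponent A ^ 2 * Nat.card ((B.flip y).prod (B x)).ker := by
  rw [← card_mul_index ((B.flip y).prod (B x)).ker, index_ker, range_flip_prod_eq hB hxy,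
    Nat.card_congr (prodEquiv _ _).toEquiv, Nat.card_prod, Nat.card_zpowers, hxy]
  ring

theorem exists_zpow_mul_zpow_inv_mul_mem_ker (a : A) :
    ∃ i k : ℤ, (x ^ i * y ^ k)⁻¹ * a ∈ ((B.flip y).prod (B x)).ker := by
  have ha : (B.flip y).prod (B x) a ∈ (zpowers (B x y)).prod (zpowers (B x y)) :=
    range_flip_prod_eq hB hxy ▸ ⟨a, rfl⟩
  obtain ⟨⟨i, hi⟩, ⟨k, hk⟩⟩ := mem_prod.mp ha
  refine ⟨i, k, ?_⟩
  rw [mem_ker, map_mul, map_inv, flip_prod_apply_zpow_mul_zpow hB, inv_mul_eq_one]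
  exact Prod.ext hi hk

theorem injective_restrict_ker (hinj : Function.Injective B) :
    Function.Injective ((B.compl₂ ((B.flip y).prod (B x)).ker.subtype).comp
      ((B.flip y).prod (B x)).ker.subtype) := by
  refine (injective_iff_map_eq_one _).mpr fun t ht =>
    Subtype.ext ((injective_iff_map_eq_one B).mp hinj _ (ext fun a => ?_))
  obtain ⟨hty, hxt⟩ := Prod.ext_iff.mp (mem_ker.mp t.2)
  have hty : B t y = 1 := hty
  have htx : B t x = 1 := by rw [apply_swap_of_apply_self hB, show B x t = 1 from hxt, inv_one]
  obtain ⟨i, k, hu⟩ := exists_zpow_mul_zpow_inv_mul_mem_ker hB hxy a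
  have htu : B t ((x ^ i * y ^ k)⁻¹ * a) = 1 := DFunLike.congr_fun ht ⟨_, hu⟩
  rw [one_apply, ← mul_inv_cancel_left (x ^ i * y ^ k) a, map_mul, htu, mul_one, map_mul,
    map_zpow, map_zpow, htx, hty, one_zpow, one_zpow, mul_one]

end Splitting

theorem isSquare_card_of_injective_of_apply_self (hinj : Function.Injective B)
    (hB : ∀ a, B a a = 1) : IsSquare (Nat.card A) := by
  induction hA : Nat.card A using Nat.strong_induction_on generalizing A with
  | _ N ih =>
  rcases subsingleton_or_nontrivial A with hA1 | hA1
  · exact hA ▸ Nat.card_unique (α := A) ▸ ⟨1, rfl⟩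
  obtain ⟨x, y, hxy⟩ := exists_orderOf_apply_apply_eq_exponent hinj
  have hcard := card_eq_exponent_sq_mul_card_ker hB hxy
  have hlt : Nat.card ((B.flip y).prod (B x)).ker < N := by
    rw [← hA, hcard]
    exact lt_mul_left Nat.card_pos (one_lt_pow₀ Monoid.one_lt_exponent two_ne_zero)
  obtain ⟨m, hm⟩ := ih _ hlt (injective_restrict_ker hB hxy hinj) (fun t => hB t) rfl
  exact ⟨Monoid.exponent A * m, by rw [← hA, hcard, hm]; ring⟩

end MonoidHom

namespace QuotientGroup

variable {G M : Type*} [Group G] [CommGroup M] (N : Subgroup G) [N.Normal]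

def lift₂ (f : G →* G →* M) (hl : ∀ x ∈ N, f x = 1) (hr : ∀ x, ∀ y ∈ N, f x y = 1) :
    G ⧸ N →* G ⧸ N →* M :=
  lift N (lift N f.flip fun y hy => MonoidHom.ext fun x => hr x y hy).flip fun x hx =>
    monoidHom_ext N (MonoidHom.ext fun y => DFunLike.congr_fun (hl x hx) y)

end QuotientGroup

section CentralCommutators

variable {G : Type*} [Group G]

theorem commutatorElement_mul_right_of_mem_center {x y z : G} (h : ⁅x, z⁆ ∈ center G) :
    ⁅x, y * z⁆ = ⁅x, y⁆ * ⁅x, z⁆ := by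
  rw [commutatorElement_mul_right_eq_mul_conj, mul_assoc _ y, mem_center_iff.mp h y, ← mul_assoc,
    mul_inv_cancel_right]

theorem commutatorElement_mul_left_of_mem_center {x x' y : G} (h : ⁅x', y⁆ ∈ center G) :
    ⁅x * x', y⁆ = ⁅x, y⁆ * ⁅x', y⁆ := by
  rw [commutatorElement_mul_left_eq_conj_mul, mem_center_iff.mp h x, mul_inv_cancel_right]
  exact (mem_center_iff.mp h _).symm

variable (hG : ∀ x y : G, ⁅x, y⁆ ∈ center G)
include hG

def commutatorHom : G →* G →* center G where
  toFun x :=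
    { toFun y := ⟨⁅x, y⁆, hG x y⟩
      map_one' := Subtype.ext (commutatorElement_one_right x)
      map_mul' _ z := Subtype.ext (commutatorElement_mul_right_of_mem_center (hG x z)) }
  map_one' := MonoidHom.ext fun y => Subtype.ext (commutatorElement_one_left y)
  map_mul' _ x' :=
    MonoidHom.ext fun y => Subtype.ext (commutatorElement_mul_left_of_mem_center (hG x' y))

def commutatorPairing : G ⧸ center G →* G ⧸ center G →* center G :=
  QuotientGroup.lift₂ (center G) (commutatorHom hG)
    (fun _ hx => MonoidHom.ext fun y => Subtype.ext (commutatorElement_eq_one_iff_mul_comm.mpr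
      (mem_center_iff.mp hx y).symm))
    (fun x _ hy => Subtype.ext (commutatorElement_eq_one_iff_mul_comm.mpr (mem_center_iff.mp hy x)))

theorem commutatorPairing_self (a : G ⧸ center G) : commutatorPairing hG a a = 1 := by
  induction a using QuotientGroup.induction_on with
  | H x => exact Subtype.ext (commutatorElement_self x)

theorem isMulCommutative_quotient_center_of_commutatorElement_mem_center :
    IsMulCommutative (G ⧸ center G) :=
  Normal.quotient_commutative_iff_commutator_le.mpr
    (commutator_def G ▸ commutator_le.mpr fun x _ y _ => hG x y)

end CentralCommutators

/-- If `G` is a finite two-step nilpotent group with center `Z` admitting a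
generic character `ψ : Z → ℂˣ` (for every `x ∉ Z` there is `y` with `ψ([x,y]) ≠ 1`),
then the index `[G : Z]` is a perfect square. -/
theorem stmt9 {G : Type*} [Group G] [Fintype G]
    (hcomm : ∀ x y : G, x * y * x⁻¹ * y⁻¹ ∈ Subgroup.center G)
    (ψ : Subgroup.center G →* ℂˣ)
    (hgen : ∀ x : G, (∀ y : G, ψ ⟨x * y * x⁻¹ * y⁻¹, hcomm x y⟩ = 1) →
      x ∈ Subgroup.center G) :
    ∃ m : ℕ, (Subgroup.center G).index = m ^ 2 := by
  have := isMulCommutative_quotient_center_of_commutatorElement_mem_center hcomm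
  have hinj : Function.Injective ((commutatorPairing hcomm).compr₂ ψ) := by
    refine (injective_iff_map_eq_one _).mpr fun a ha => ?_
    induction a using QuotientGroup.induction_on with
    | H x =>
      exact (QuotientGroup.eq_one_iff x).mpr <| hgen x fun y =>
        DFunLike.congr_fun ha (y : G ⧸ center G)
  obtain ⟨m, hm⟩ := MonoidHom.isSquare_card_of_injective_of_apply_self hinj fun a => by
    rw [MonoidHom.compr₂_apply, commutatorPairing_self, map_one]
  exact ⟨m, by rw [index, hm, sq]⟩
end

section
/- Let q = p^m and consider the affine surface E = {(x,y,z) ∈ 𝔸³ over an algebraically closed field k of characteristic p : x^q · y = z^p - z}. Then the divisor of the regular function z on E equals X0 + q·Y0, where X0 = {y = 0, z = 0} and Y0 = {x = 0, z = 0} are the two irreducible (reduced) curves in the zero locus of z; i.e. the zero scheme of z on E has irreducible components X0 with multiplicity 1 and Y0 with multiplicity q. -/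
/-!
Modulo `z`, the equation `x^q y = z^p - z` becomes `x^q y = 0`, so the zero scheme of `z` is
`Spec k[x,y]/(x^q y)`, with reduced components `V(x)` and `V(y)`. Localised at the height one
prime `(x)` (resp. `(y)`) the ring `k[x,y]` is a local domain whose maximal ideal is generated
by `x` (resp. `y`), and `x^q y` becomes `x^q` times a unit (resp. `y` times a unit). In a local
domain with principal maximal ideal `(t)`, the module `R/(t^n)` has length `n`.
-/

open MvPolynomial

namespace Ideal

variable {R : Type*} [CommRing R]

theorem span_pair_sub_pow_add_self {z a : R} {p : ℕ} (hp : p ≠ 0) :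
    span {z, a - z ^ p + z} = span {z, a} := by
  obtain ⟨n, rfl⟩ := Nat.exists_eq_succ_of_ne_zero hp
  rw [show a - z ^ (n + 1) + z = a + (1 - z ^ n) * z by ring, span_pair_add_mul_left]

theorem radical_span_pow_mul {a b : R} {n : ℕ} (hn : n ≠ 0) :
    (span {a ^ n * b}).radical = (span {a}).radical ⊓ (span {b}).radical := by
  rw [← span_singleton_mul_span_singleton, ← span_singleton_pow, radical_mul, radical_pow _ hn]

end Ideal

theorem exists_compositionSeries_of_length_eq {R M : Type*} [Ring R] [AddCommGroup M]
    [Module R M] {n : ℕ} (h : Module.length R M = n) :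
    ∃ s : CompositionSeries (Submodule R M), s.head = ⊥ ∧ s.last = ⊤ ∧ s.length = n := by
  obtain ⟨s, hs₁, hs₂⟩ := isFiniteLength_iff_exists_compositionSeries.mp
    (Module.length_ne_top_iff.mp (h ▸ ENat.natCast_ne_top n))
  refine ⟨s, hs₁, hs₂, ?_⟩
  exact_mod_cast (Module.length_compositionSeries s hs₁ hs₂).trans h

namespace Ring

variable {R : Type*} [CommRing R]

theorem ord_eq_one_of_isMaximal {t : R} (ht : (Ideal.span {t}).IsMaximal) : ord R t = 1 := by
  rw [ord, Module.length_eq_one_iff, isSimpleModule_iff_quot_maximal]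
  exact ⟨_, ht, ⟨LinearEquiv.refl R _⟩⟩

theorem ord_pow_mul_of_isUnit {t u : R} (ht : t ∈ nonZeroDivisors R)
    (htm : (Ideal.span {t}).IsMaximal) (hu : IsUnit u) (n : ℕ) : ord R (t ^ n * u) = n := by
  rw [ord_mul_of_isUnit_right hu, ord_pow ht, ord_eq_one_of_isMaximal htm, nsmul_one]

theorem ord_algebraMap_pow_mul_atPrime [IsDomain R] {t u : R} [(Ideal.span {t}).IsPrime]
    (ht : t ≠ 0) (hu : u ∉ Ideal.span {t}) (n : ℕ) :
    ord (Localization.AtPrime (Ideal.span {t})) (algebraMap R _ (t ^ n * u)) = n := by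
  let Rₚ := Localization.AtPrime (Ideal.span {t})
  have ht' : algebraMap R Rₚ t ∈ nonZeroDivisors Rₚ := mem_nonZeroDivisors_of_ne_zero
    ((map_ne_zero_iff _ (IsLocalization.injective Rₚ
      (Ideal.span {t}).primeCompl_le_nonZeroDivisors)).mpr ht)
  have htm : (Ideal.span {algebraMap R Rₚ t}).IsMaximal := by
    rw [← Set.image_singleton, ← Ideal.map_span, Localization.AtPrime.map_eq_maximalIdeal]
    exact IsLocalRing.maximalIdeal.isMaximal Rₚ
  have hu' : IsUnit (algebraMap R Rₚ u) :=
    IsLocalization.map_units (M := (Ideal.span {t}).primeCompl) Rₚ ⟨u, hu⟩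
  rw [map_mul, map_pow]
  exact ord_pow_mul_of_isUnit ht' htm hu' n

end Ring

theorem MvPolynomial.X_notMem_span_X {σ k : Type*} [CommSemiring k] [Nontrivial k] {i j : σ}
    (h : i ≠ j) : (X i : MvPolynomial σ k) ∉ Ideal.span {X j} := by
  rw [Ideal.mem_span_singleton, X_dvd_X]
  exact h.symm

theorem stmt18_general {p : ℕ} [Fact p.Prime] {k : Type*} [Field k]
    (m : ℕ) (q : ℕ) (hq : q = p ^ m)
    [hPx : (Ideal.span {(X 0 : MvPolynomial (Fin 2) k)}).IsPrime]
    [hPy : (Ideal.span {(X 1 : MvPolynomial (Fin 2) k)}).IsPrime] :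
    -- (a) on `E`, the zero scheme of `z` is cut out by `(z, x^q y)`
    (Ideal.span {(X 2 : MvPolynomial (Fin 3) k),
        X 0 ^ q * X 1 - X 2 ^ p + X 2} =
      Ideal.span {(X 2 : MvPolynomial (Fin 3) k), X 0 ^ q * X 1}) ∧
    -- (b) the reduced components of the zero scheme are `X0 = V(y)` and `Y0 = V(x)`
    ((Ideal.span {(X 0 : MvPolynomial (Fin 2) k) ^ q * X 1}).radical =
      Ideal.span {(X 1 : MvPolynomial (Fin 2) k)} ⊓
        Ideal.span {(X 0 : MvPolynomial (Fin 2) k)}) ∧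
    -- (c) the multiplicity along `Y0 = V(x,z)` is `q` ...
    (∃ s : CompositionSeries (Submodule
        (Localization.AtPrime (Ideal.span {(X 0 : MvPolynomial (Fin 2) k)}))
        ((Localization.AtPrime (Ideal.span {(X 0 : MvPolynomial (Fin 2) k)})) ⧸
          (Ideal.map (algebraMap (MvPolynomial (Fin 2) k)
              (Localization.AtPrime (Ideal.span {(X 0 : MvPolynomial (Fin 2) k)})))
            (Ideal.span {(X 0 : MvPolynomial (Fin 2) k) ^ q * X 1})))),
      s.head = ⊥ ∧ s.last = ⊤ ∧ s.length = q) ∧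
    -- ... and the multiplicity along `X0 = V(y,z)` is `1`
    (∃ s : CompositionSeries (Submodule
        (Localization.AtPrime (Ideal.span {(X 1 : MvPolynomial (Fin 2) k)}))
        ((Localization.AtPrime (Ideal.span {(X 1 : MvPolynomial (Fin 2) k)})) ⧸
          (Ideal.map (algebraMap (MvPolynomial (Fin 2) k)
              (Localization.AtPrime (Ideal.span {(X 1 : MvPolynomial (Fin 2) k)})))
            (Ideal.span {(X 0 : MvPolynomial (Fin 2) k) ^ q * X 1})))),
      s.head = ⊥ ∧ s.last = ⊤ ∧ s.length = 1) := by
  have hp : p ≠ 0 := (Fact.out : p.Prime).ne_zero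
  have hq0 : q ≠ 0 := hq ▸ pow_ne_zero m hp
  have hX01 : (X 0 : MvPolynomial (Fin 2) k) ∉ Ideal.span {X 1} := X_notMem_span_X (by decide)
  have hX10 : (X 1 : MvPolynomial (Fin 2) k) ∉ Ideal.span {X 0} := X_notMem_span_X (by decide)
  refine ⟨Ideal.span_pair_sub_pow_add_self hp, ?_, ?_, ?_⟩
  · rw [Ideal.radical_span_pow_mul hq0, hPx.radical, hPy.radical, inf_comm]
  · rw [Ideal.map_span, Set.image_singleton]
    exact exists_compositionSeries_of_length_eq
      (Ring.ord_algebraMap_pow_mul_atPrime (X_ne_zero 0) hX10 q)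
  · have hord := Ring.ord_algebraMap_pow_mul_atPrime (X_ne_zero 1)
      (fun h => hX01 (hPy.mem_of_pow_mem q h)) 1
    rw [pow_one, mul_comm] at hord
    rw [Ideal.map_span, Set.image_singleton]
    exact exists_compositionSeries_of_length_eq hord

/-- Let `q = p^m` and `E = {x^q y = z^p - z} ⊂ 𝔸³` over an algebraically
closed field `k` of characteristic `p`.  The divisor of the function `z` on `E` is
`X0 + q·Y0` where `X0 = V(y,z)` and `Y0 = V(x,z)`: the zero scheme of `z` on `E` is cut out
by the ideal `(z, x^q y)` (equivalently, by `x^q y` in `k[x,y]`), its reduced components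
are `V(x)` and `V(y)`, and the lengths of the local rings of this zero scheme at the
generic points of `Y0` (resp. `X0`) — i.e. of the localizations of `k[x,y]/(x^q y)` at the
primes `(x)` (resp. `(y)`) — are `q` (resp. `1`), measured by composition series. -/
theorem stmt18 {p : ℕ} [Fact p.Prime] {k : Type*} [Field k] [IsAlgClosed k] [CharP k p]
    (m : ℕ) (q : ℕ) (hq : q = p ^ m)
    [hPx : (Ideal.span {(X 0 : MvPolynomial (Fin 2) k)}).IsPrime]
    [hPy : (Ideal.span {(X 1 : MvPolynomial (Fin 2) k)}).IsPrime] :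
    -- (a) on `E`, the zero scheme of `z` is cut out by `(z, x^q y)`
    (Ideal.span {(X 2 : MvPolynomial (Fin 3) k),
        X 0 ^ q * X 1 - X 2 ^ p + X 2} =
      Ideal.span {(X 2 : MvPolynomial (Fin 3) k), X 0 ^ q * X 1}) ∧
    -- (b) the reduced components of the zero scheme are `X0 = V(y)` and `Y0 = V(x)`
    ((Ideal.span {(X 0 : MvPolynomial (Fin 2) k) ^ q * X 1}).radical =
      Ideal.span {(X 1 : MvPolynomial (Fin 2) k)} ⊓
        Ideal.span {(X 0 : MvPolynomial (Fin 2) k)}) ∧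
    -- (c) the multiplicity along `Y0 = V(x,z)` is `q` ...
    (∃ s : CompositionSeries (Submodule
        (Localization.AtPrime (Ideal.span {(X 0 : MvPolynomial (Fin 2) k)}))
        ((Localization.AtPrime (Ideal.span {(X 0 : MvPolynomial (Fin 2) k)})) ⧸
          (Ideal.map (algebraMap (MvPolynomial (Fin 2) k)
              (Localization.AtPrime (Ideal.span {(X 0 : MvPolynomial (Fin 2) k)})))
            (Ideal.span {(X 0 : MvPolynomial (Fin 2) k) ^ q * X 1})))),
      s.head = ⊥ ∧ s.last = ⊤ ∧ s.length = q) ∧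
    -- ... and the multiplicity along `X0 = V(y,z)` is `1`
    (∃ s : CompositionSeries (Submodule
        (Localization.AtPrime (Ideal.span {(X 1 : MvPolynomial (Fin 2) k)}))
        ((Localization.AtPrime (Ideal.span {(X 1 : MvPolynomial (Fin 2) k)})) ⧸
          (Ideal.map (algebraMap (MvPolynomial (Fin 2) k)
              (Localization.AtPrime (Ideal.span {(X 1 : MvPolynomial (Fin 2) k)})))
            (Ideal.span {(X 0 : MvPolynomial (Fin 2) k) ^ q * X 1})))),
      s.head = ⊥ ∧ s.last = ⊤ ∧ s.length = 1) :=
  stmt18_general m q hq (hPx := hPx) (hPy := hPy)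
end
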